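/- Let A_1, …, A_K be symmetric positive-definite d×d real matrices and b_1, …, b_K ∈ ℝ^d, and let A_s = Σ_{k=1}^K A_k. Then ‖Σ_{k=1}^K A_k b_k‖² ≤ ‖A_s‖_op² · ‖A_s^{-1}‖_op · Σ_{k=1}^K ‖A_k‖_op ‖b_k‖². -/

import Mathlib

/-- Apply a real `d × d` matrix as a continuous linear map on Euclidean space. -/
noncomputable def mApp {d : ℕ} (A : Matrix (Fin d) (Fin d) ℝ) :
    EuclideanSpace ℝ (Fin d) →L[ℝ] EuclideanSpace ℝ (Fin d) :=
  Matrix.toEuclideanCLM (𝕜 := ℝ) A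

/-- The ℓ²-operator (spectral) norm of a real matrix. -/
noncomputable def opNorm {d : ℕ} (A : Matrix (Fin d) (Fin d) ℝ) : ℝ :=
  ‖mApp A‖

open scoped RealInnerProductSpace

lemma opNorm_nonneg' {d : ℕ} (M : Matrix (Fin d) (Fin d) ℝ) : 0 ≤ opNorm M :=
  norm_nonneg _

lemma mApp_mul {d : ℕ} (M N : Matrix (Fin d) (Fin d) ℝ) :
    mApp (M * N) = mApp M * mApp N := by
  simp [mApp, map_mul]

lemma mApp_selfAdjoint_inner {d : ℕ} {M : Matrix (Fin d) (Fin d) ℝ}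
    (hM : M.IsHermitian) (u v : EuclideanSpace ℝ (Fin d)) :
    ⟪mApp M u, v⟫ = ⟪u, mApp M v⟫ := by
  have hs : star M = M := hM
  have hadj : ContinuousLinearMap.adjoint (mApp M) = mApp M := by
    rw [← ContinuousLinearMap.star_eq_adjoint, mApp, ← map_star, hs]
  have h := ContinuousLinearMap.adjoint_inner_left (mApp M) v u
  rw [hadj] at h
  exact h

section sqrtPort
open scoped MatrixOrder

noncomputable def Matrix.PosSemidef.sqrt {d : ℕ} {M : Matrix (Fin d) (Fin d) ℝ}
    (_ : M.PosSemidef) : Matrix (Fin d) (Fin d) ℝ :=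
  CFC.sqrt M

lemma Matrix.PosSemidef.sqrt_mul_self {d : ℕ} {M : Matrix (Fin d) (Fin d) ℝ}
    (hM : M.PosSemidef) : hM.sqrt * hM.sqrt = M :=
  CFC.sqrt_mul_sqrt_self M hM.nonneg

lemma Matrix.PosSemidef.posSemidef_sqrt {d : ℕ} {M : Matrix (Fin d) (Fin d) ℝ}
    (hM : M.PosSemidef) : hM.sqrt.PosSemidef :=
  Matrix.nonneg_iff_posSemidef.mp (CFC.sqrt_nonneg M)

end sqrtPort

lemma mApp_sqrt_inner {d : ℕ} {M : Matrix (Fin d) (Fin d) ℝ}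
    (hM : M.PosSemidef) (u v : EuclideanSpace ℝ (Fin d)) :
    ⟪mApp M u, v⟫ = ⟪mApp hM.sqrt u, mApp hM.sqrt v⟫ := by
  have h1 : mApp M = mApp hM.sqrt * mApp hM.sqrt := by
    rw [← mApp_mul, hM.sqrt_mul_self]
  rw [h1]
  exact mApp_selfAdjoint_inner hM.posSemidef_sqrt.1 _ _

lemma posDef_sum' {d K : ℕ} (hK : 1 ≤ K)
    (A : Fin K → Matrix (Fin d) (Fin d) ℝ) (h : ∀ k, (A k).PosDef) :
    (∑ k, A k).PosDef := by
  have k0 : Fin K := ⟨0, hK⟩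
  have hs : (∑ k ∈ Finset.univ.erase k0, A k).PosSemidef :=
    Finset.sum_induction A _ (fun a b ha hb => ha.add hb) Matrix.PosSemidef.zero
      (fun k _ => (h k).posSemidef)
  rw [← Finset.add_sum_erase Finset.univ A (Finset.mem_univ k0)]
  exact (h k0).add_posSemidef hs

/-- Matrix Jensen-type inequality for sums of symmetric
positive-definite matrices applied to vectors. -/
theorem matrix_jensen_inequality
    (d K : ℕ) (hK : 1 ≤ K)
    (A : Fin K → Matrix (Fin d) (Fin d) ℝ)
    (hAsymm : ∀ k, (A k).IsSymm) (hApd : ∀ k, (A k).PosDef)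
    (b : Fin K → EuclideanSpace ℝ (Fin d)) :
    ‖∑ k, mApp (A k) (b k)‖ ^ 2
      ≤ opNorm (∑ k, A k) ^ 2 * opNorm (∑ k, A k)⁻¹ *
          ∑ k, opNorm (A k) * ‖b k‖ ^ 2 := by
  classical
  set As : Matrix (Fin d) (Fin d) ℝ := ∑ k, A k with hAsdef
  set x : EuclideanSpace ℝ (Fin d) := ∑ k, mApp (A k) (b k) with hxdef
  have hPnn : (0:ℝ) ≤ ∑ k, opNorm (A k) * ‖b k‖ ^ 2 :=
    Finset.sum_nonneg fun k _ => mul_nonneg (opNorm_nonneg' _) (sq_nonneg _)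
  have hRHSnn : 0 ≤ opNorm As ^ 2 * opNorm As⁻¹ * ∑ k, opNorm (A k) * ‖b k‖ ^ 2 :=
    mul_nonneg (mul_nonneg (sq_nonneg _) (opNorm_nonneg' _)) hPnn
  by_cases hx0 : x = 0
  · rw [hx0]
    simpa using hRHSnn
  · haveI : Nontrivial (EuclideanSpace ℝ (Fin d)) := nontrivial_of_ne x 0 hx0
    have hAspd : As.PosDef := posDef_sum' hK A hApd
    -- Step 1: ‖x‖² ≤ ∑ ‖S_k b_k‖ ‖S_k x‖
    have step1 : ‖x‖ ^ 2 ≤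
        ∑ k, ‖mApp ((hApd k).posSemidef).sqrt (b k)‖ *
          ‖mApp ((hApd k).posSemidef).sqrt x‖ := by
      have h1 : ‖x‖ ^ 2 = ∑ k, ⟪mApp ((hApd k).posSemidef).sqrt (b k),
          mApp ((hApd k).posSemidef).sqrt x⟫ := by
        rw [← real_inner_self_eq_norm_sq]
        nth_rewrite 1 [hxdef]
        rw [sum_inner]
        exact Finset.sum_congr rfl fun k _ =>
          mApp_sqrt_inner (hApd k).posSemidef (b k) x
      rw [h1]
      exact Finset.sum_le_sum fun k _ => real_inner_le_norm _ _
    -- Step 2: ∑ ‖S_k b_k‖² ≤ ∑ opNorm (A k) ‖b k‖²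
    have step2 : ∑ k, ‖mApp ((hApd k).posSemidef).sqrt (b k)‖ ^ 2
        ≤ ∑ k, opNorm (A k) * ‖b k‖ ^ 2 := by
      refine Finset.sum_le_sum fun k _ => ?_
      have h1 : ‖mApp ((hApd k).posSemidef).sqrt (b k)‖ ^ 2
          = ⟪mApp (A k) (b k), b k⟫ := by
        rw [mApp_sqrt_inner (hApd k).posSemidef (b k) (b k),
          real_inner_self_eq_norm_sq]
      rw [h1]
      calc ⟪mApp (A k) (b k), b k⟫ ≤ ‖mApp (A k) (b k)‖ * ‖b k‖ :=
            real_inner_le_norm _ _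
        _ ≤ (‖mApp (A k)‖ * ‖b k‖) * ‖b k‖ :=
            mul_le_mul_of_nonneg_right ((mApp (A k)).le_opNorm (b k)) (norm_nonneg _)
        _ = opNorm (A k) * ‖b k‖ ^ 2 := by rw [opNorm]; ring
    -- Step 3: ∑ ‖S_k x‖² ≤ opNorm As * ‖x‖²
    have step3 : ∑ k, ‖mApp ((hApd k).posSemidef).sqrt x‖ ^ 2
        ≤ opNorm As * ‖x‖ ^ 2 := by
      have h2 : mApp As = ∑ k, mApp (A k) := by
        rw [mApp, hAsdef, map_sum]
        rfl
      have h1 : ∑ k, ‖mApp ((hApd k).posSemidef).sqrt x‖ ^ 2 = ⟪mApp As x, x⟫ := by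
        rw [h2, ContinuousLinearMap.sum_apply, sum_inner]
        refine Finset.sum_congr rfl fun k _ => ?_
        rw [mApp_sqrt_inner (hApd k).posSemidef x x, real_inner_self_eq_norm_sq]
      rw [h1]
      calc ⟪mApp As x, x⟫ ≤ ‖mApp As x‖ * ‖x‖ := real_inner_le_norm _ _
        _ ≤ (‖mApp As‖ * ‖x‖) * ‖x‖ :=
            mul_le_mul_of_nonneg_right ((mApp As).le_opNorm x) (norm_nonneg _)
        _ = opNorm As * ‖x‖ ^ 2 := by rw [opNorm]; ring
    -- Combine via Cauchy-Schwarz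
    have key : (‖x‖ ^ 2) ^ 2
        ≤ (∑ k, opNorm (A k) * ‖b k‖ ^ 2) * (opNorm As * ‖x‖ ^ 2) := by
      calc (‖x‖ ^ 2) ^ 2
          ≤ (∑ k, ‖mApp ((hApd k).posSemidef).sqrt (b k)‖ *
              ‖mApp ((hApd k).posSemidef).sqrt x‖) ^ 2 :=
            pow_le_pow_left₀ (sq_nonneg _) step1 2
        _ ≤ (∑ k, ‖mApp ((hApd k).posSemidef).sqrt (b k)‖ ^ 2) *
              ∑ k, ‖mApp ((hApd k).posSemidef).sqrt x‖ ^ 2 :=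
            Finset.sum_mul_sq_le_sq_mul_sq _ _ _
        _ ≤ (∑ k, opNorm (A k) * ‖b k‖ ^ 2) * (opNorm As * ‖x‖ ^ 2) :=
            mul_le_mul step2 step3
              (Finset.sum_nonneg fun k _ => sq_nonneg _) hPnn
    have hN : 0 < ‖x‖ ^ 2 := pow_pos (norm_pos_iff.mpr hx0) 2
    have hmain : ‖x‖ ^ 2 ≤ (∑ k, opNorm (A k) * ‖b k‖ ^ 2) * opNorm As := by
      nlinarith [key, hN]
    have h1le : (1:ℝ) ≤ opNorm As * opNorm As⁻¹ := by
      have hinv : As * As⁻¹ = 1 :=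
        Matrix.mul_nonsing_inv _ (isUnit_iff_ne_zero.mpr hAspd.det_pos.ne')
      have h2 : (1 : EuclideanSpace ℝ (Fin d) →L[ℝ] EuclideanSpace ℝ (Fin d))
          = mApp As * mApp As⁻¹ := by
        rw [← mApp_mul, hinv, mApp, map_one]
      calc (1:ℝ)
          = ‖(1 : EuclideanSpace ℝ (Fin d) →L[ℝ] EuclideanSpace ℝ (Fin d))‖ := by
            rw [ContinuousLinearMap.one_def, ContinuousLinearMap.norm_id]
        _ = ‖mApp As * mApp As⁻¹‖ := by rw [← h2]
        _ ≤ ‖mApp As‖ * ‖mApp As⁻¹‖ := norm_mul_le _ _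
        _ = opNorm As * opNorm As⁻¹ := rfl
    nlinarith [hmain, h1le, opNorm_nonneg' As, opNorm_nonneg' As⁻¹, hPnn,
      mul_le_mul_of_nonneg_right h1le
        (mul_nonneg (opNorm_nonneg' As) hPnn)]
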